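/- Let k ≥ 3 and c > 0. The equation B = c·f_k(B) has a positive solution B > 0 if and only if c > (k-2)/2, where f_k(B) = 2B·∫_B^∞ ψ_{k-1}(x)·x^{-2} dx. -/

import Mathlib

open MeasureTheory

/-- `psi m x` is the probability that a Poisson random variable with mean `x`
takes a value at least `m`. -/
noncomputable def psi (m : ℕ) (x : ℝ) : ℝ :=
  ∑' t : ℕ, if m ≤ t then x ^ t * Real.exp (-x) / t.factorial else 0

/-- `fk k B = 2 B ∫_B^∞ ψ_{k-1}(x) x⁻² dx`. -/
noncomputable def fk (k : ℕ) (B : ℝ) : ℝ :=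
  2 * B * ∫ x in Set.Ioi B, psi (k - 1) x / x ^ 2

/-!
For `B > 0` the equation `B = c f_k(B)` says `g_k(B) = 1/(2c)`. Expanding `ψ_{k-1}(x)/x²` in its
Poisson series and integrating term by term against Gamma integrals gives the telescoping sum
`g_k(0) = ∑_{N ≥ k-3} N!/(N+2)! = 1/(k-2)`. As the integrand is positive, `g_k(B) < g_k(0)` for
`B > 0`; as `ψ ≤ 1`, `g_k(B) ≤ 1/B`. So `g_k` never reaches `1/(k-2)` on `(0, ∞)`, while by
continuity and the intermediate value theorem it takes every value in `(0, 1/(k-2))`.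
-/

open Set Filter Topology

lemma hasSum_poisson_weights (x : ℝ) :
    HasSum (fun t : ℕ => x ^ t * Real.exp (-x) / t.factorial) 1 := by
  have h := (NormedSpace.expSeries_div_hasSum_exp x).mul_right (Real.exp (-x))
  rw [← Real.exp_eq_exp_ℝ, ← Real.exp_add, add_neg_cancel, Real.exp_zero] at h
  exact h.congr_fun fun t => by ring

lemma psi_eq_tsum_nat_add (m : ℕ) (x : ℝ) :
    psi m x = ∑' n : ℕ, x ^ (n + m) * Real.exp (-x) / (n + m).factorial := by
  have hsum : Summable fun n : ℕ => x ^ (n + m) * Real.exp (-x) / (n + m).factorial :=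
    (summable_nat_add_iff m).2 (hasSum_poisson_weights x).summable
  rw [psi, ← ((summable_nat_add_iff m).1 (hsum.congr fun n => by simp)).sum_add_tsum_nat_add m]
  simp [Finset.sum_eq_zero fun t ht => if_neg (Finset.mem_range.1 ht).not_ge]

lemma psi_pos (m : ℕ) {x : ℝ} (hx : 0 < x) : 0 < psi m x := by
  rw [psi_eq_tsum_nat_add]
  exact ((summable_nat_add_iff m).2 (hasSum_poisson_weights x).summable).tsum_pos
    (fun n => by positivity) 0 (by positivity)

lemma psi_le_one (m : ℕ) {x : ℝ} (hx : 0 ≤ x) : psi m x ≤ 1 := by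
  rw [psi_eq_tsum_nat_add, ← (hasSum_poisson_weights x).tsum_eq]
  exact tsum_comp_le_tsum_of_inj (hasSum_poisson_weights x).summable (fun t => by positivity)
    (add_left_injective m)

lemma hasSum_sub_succ_of_antitone {f : ℕ → ℝ} (hf : Antitone f)
    (hlim : Tendsto f atTop (𝓝 0)) : HasSum (fun n => f n - f (n + 1)) (f 0) := by
  rw [hasSum_iff_tendsto_nat_of_nonneg (fun n => sub_nonneg.2 (hf n.le_succ))]
  simp_rw [Finset.sum_range_sub']
  simpa using tendsto_const_nhds.sub hlim

lemma integral_exp_neg_mul_pow (j : ℕ) :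
    ∫ x in Ioi (0 : ℝ), Real.exp (-x) * x ^ j = j.factorial := by
  rw [← Real.Gamma_nat_eq_factorial, Real.Gamma_eq_integral (by positivity)]
  refine setIntegral_congr_fun measurableSet_Ioi fun x _ => ?_
  rw [add_sub_cancel_right, Real.rpow_natCast]

lemma integrableOn_exp_neg_mul_pow (j : ℕ) :
    IntegrableOn (fun x : ℝ => Real.exp (-x) * x ^ j) (Ioi 0) :=
  Integrable.of_integral_ne_zero <| by
    rw [integral_exp_neg_mul_pow]; exact_mod_cast (Nat.factorial_pos j).ne'

lemma factorial_div_factorial_add_two (N : ℕ) :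
    (N.factorial : ℝ) / (N + 2).factorial = ((N : ℝ) + 1)⁻¹ - ((N : ℝ) + 2)⁻¹ := by
  rw [Nat.factorial_succ, Nat.factorial_succ]
  push_cast
  field_simp
  ring

lemma psi_div_sq_eq_tsum (j : ℕ) {x : ℝ} (hx : x ≠ 0) :
    psi (j + 2) x / x ^ 2
      = ∑' n : ℕ, Real.exp (-x) * x ^ (n + j) / (n + j + 2).factorial := by
  rw [psi_eq_tsum_nat_add, ← tsum_div_const]
  refine tsum_congr fun n => ?_
  rw [← add_assoc, pow_add]
  field_simp

lemma integral_psi_div_sq (m : ℕ) (hm : 2 ≤ m) :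
    ∫ x in Ioi (0 : ℝ), psi m x / x ^ 2 = ((m : ℝ) - 1)⁻¹ := by
  obtain ⟨j, rfl⟩ := Nat.exists_eq_add_of_le' hm
  set G : ℕ → ℝ → ℝ := fun n x => Real.exp (-x) * x ^ (n + j) / (n + j + 2).factorial
  have hG_integral : ∀ n, ∫ x in Ioi (0 : ℝ), G n x
      = ((n : ℝ) + j + 1)⁻¹ - ((n : ℝ) + j + 2)⁻¹ := fun n => by
    rw [integral_div, integral_exp_neg_mul_pow, factorial_div_factorial_add_two]
    push_cast; ring
  have hG_norm : ∀ n, ∫ x in Ioi (0 : ℝ), ‖G n x‖ = ∫ x in Ioi (0 : ℝ), G n x :=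
    fun n => setIntegral_congr_fun measurableSet_Ioi fun x (hx : 0 < x) =>
      Real.norm_of_nonneg (by positivity)
  have htel : HasSum (fun n => ∫ x in Ioi (0 : ℝ), G n x) ((j : ℝ) + 1)⁻¹ := by
    convert hasSum_sub_succ_of_antitone (f := fun n : ℕ => ((n : ℝ) + j + 1)⁻¹)
      (fun a b hab => by dsimp only; gcongr) ?_ using 1
    · ext n; rw [hG_integral]; push_cast; ring
    · simp
    · exact tendsto_inv_atTop_zero.comp <| tendsto_atTop_add_const_right _ 1 <|
        tendsto_atTop_add_const_right _ _ tendsto_natCast_atTop_atTop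
  have hswap := hasSum_integral_of_summable_integral_norm (F := G)
    (fun n => (integrableOn_exp_neg_mul_pow (n + j)).div_const _)
    (by simpa only [hG_norm] using htel.summable)
  calc ∫ x in Ioi (0 : ℝ), psi (j + 2) x / x ^ 2
      = ∫ x in Ioi (0 : ℝ), ∑' n, G n x :=
        setIntegral_congr_fun measurableSet_Ioi fun x hx => psi_div_sq_eq_tsum j (ne_of_gt hx)
    _ = ((j : ℝ) + 1)⁻¹ := hswap.unique htel
    _ = (((j + 2 : ℕ) : ℝ) - 1)⁻¹ := by push_cast; ring

/- `integral_psi_div_sq` went through `integral_tsum`, which does not presuppose integrability,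
so the nonzero value of the integral certifies it. -/
lemma integrableOn_psi_div_sq {m : ℕ} (hm : 2 ≤ m) :
    IntegrableOn (fun x => psi m x / x ^ 2) (Ioi 0) :=
  Integrable.of_integral_ne_zero <| by
    have : (2 : ℝ) ≤ m := by exact_mod_cast hm
    rw [integral_psi_div_sq m hm]
    exact inv_ne_zero (by linarith)

/-- `psiTail (k - 1)` is the `g_k` of the statement: `fk k B = 2 * B * psiTail (k - 1) B`. -/
noncomputable def psiTail (m : ℕ) (B : ℝ) : ℝ :=
  ∫ x in Ioi B, psi m x / x ^ 2

section psiTail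

variable {m : ℕ}

lemma psiTail_zero (hm : 2 ≤ m) : psiTail m 0 = ((m : ℝ) - 1)⁻¹ :=
  integral_psi_div_sq m hm

lemma psiTail_eq_sub (hm : 2 ≤ m) {B : ℝ} (hB : 0 ≤ B) :
    psiTail m B = ((m : ℝ) - 1)⁻¹ - ∫ x in (0 : ℝ)..B, psi m x / x ^ 2 := by
  rw [← psiTail_zero hm,
    ← intervalIntegral.integral_Ioi_sub_Ioi (integrableOn_psi_div_sq hm) hB]
  exact (sub_sub_cancel _ _).symm

lemma psiTail_lt (hm : 2 ≤ m) {B : ℝ} (hB : 0 < B) : psiTail m B < ((m : ℝ) - 1)⁻¹ := by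
  rw [psiTail_eq_sub hm hB.le, sub_lt_self_iff]
  refine intervalIntegral.intervalIntegral_pos_of_pos_on ?_ (fun x hx => ?_) hB
  · exact (intervalIntegrable_iff_integrableOn_Ioc_of_le hB.le).2
      ((integrableOn_psi_div_sq hm).mono_set Ioc_subset_Ioi_self)
  · exact div_pos (psi_pos m hx.1) (pow_pos hx.1 2)

lemma psiTail_le_inv (hm : 2 ≤ m) {B : ℝ} (hB : 0 < B) : psiTail m B ≤ B⁻¹ := by
  calc psiTail m B ≤ ∫ x in Ioi B, x ^ (-2 : ℝ) := by
        refine setIntegral_mono_on ((integrableOn_psi_div_sq hm).mono_set (Ioi_subset_Ioi hB.le))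
          (integrableOn_Ioi_rpow_of_lt (by norm_num) hB) measurableSet_Ioi fun x hx => ?_
        have hx0 : 0 < x := hB.trans hx
        rw [Real.rpow_neg hx0.le, Real.rpow_two, div_eq_mul_inv]
        exact mul_le_of_le_one_left (by positivity) (psi_le_one m hx0.le)
    _ = B⁻¹ := by
        rw [integral_Ioi_rpow_of_lt (by norm_num) hB]
        norm_num [Real.rpow_neg_one]

lemma continuousOn_psiTail (hm : 2 ≤ m) {M : ℝ} (hM : 0 ≤ M) :
    ContinuousOn (psiTail m) (Icc 0 M) := by
  have hprim := intervalIntegral.continuousOn_primitive_interval' (a := 0)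
    ((intervalIntegrable_iff_integrableOn_Ioc_of_le hM).2
      ((integrableOn_psi_div_sq hm).mono_set Ioc_subset_Ioi_self)) left_mem_uIcc
  rw [uIcc_of_le hM] at hprim
  exact (continuousOn_const.sub hprim).congr fun B hB => psiTail_eq_sub hm hB.1

lemma exists_psiTail_eq (hm : 2 ≤ m) {y : ℝ} (hy : 0 < y) (hym : y < ((m : ℝ) - 1)⁻¹) :
    ∃ B, 0 < B ∧ psiTail m B = y := by
  have hM : 0 < 2 * y⁻¹ := by positivity
  have hyM : psiTail m (2 * y⁻¹) ≤ y := by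
    have := psiTail_le_inv hm hM
    rw [mul_inv, inv_inv] at this
    linarith
  obtain ⟨B, hB, hBy⟩ := intermediate_value_Icc' hM.le (continuousOn_psiTail hm hM.le)
    ⟨hyM, (psiTail_zero hm).symm ▸ hym.le⟩
  refine ⟨B, hB.1.lt_of_ne ?_, hBy⟩
  rintro rfl
  rw [psiTail_zero hm] at hBy
  exact hym.ne' hBy

end psiTail

theorem exists_pos_fixed_point_iff (k : ℕ) (hk : 3 ≤ k) (c : ℝ) (hc : 0 < c) :
    (∃ B : ℝ, 0 < B ∧ B = c * fk k B) ↔ ((k : ℝ) - 2) / 2 < c := by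
  have hm : 2 ≤ k - 1 := by omega
  have hk2 : 0 < (k : ℝ) - 2 := by
    have : (3 : ℝ) ≤ k := by exact_mod_cast hk
    linarith
  have hcast : (((k - 1 : ℕ) : ℝ) - 1)⁻¹ = ((k : ℝ) - 2)⁻¹ := by
    rw [Nat.cast_sub (by omega)]; ring_nf
  have hfixed : ∀ B : ℝ, 0 < B → (B = c * fk k B ↔ psiTail (k - 1) B = (2 * c)⁻¹) := by
    intro B hB
    have hrearrange : c * fk k B = B * (psiTail (k - 1) B * (2 * c)) := by
      rw [fk, psiTail]; ring
    rw [hrearrange, eq_comm, mul_eq_left₀ hB.ne', mul_eq_one_iff_eq_inv₀ (by positivity)]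
  constructor
  · rintro ⟨B, hB, hBc⟩
    have hlt := psiTail_lt hm hB
    rw [(hfixed B hB).1 hBc, hcast, inv_lt_inv₀ (by positivity) hk2] at hlt
    linarith
  · intro hck
    obtain ⟨B, hB, hBy⟩ := exists_psiTail_eq hm (y := (2 * c)⁻¹) (by positivity) <| by
      rw [hcast]; exact inv_strictAnti₀ hk2 (by linarith)
    exact ⟨B, hB, (hfixed B hB).2 hBy⟩
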